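/- Let (X, Σ, c, c_f) be a generalized control system satisfying (C1) and (C2). Let (γ, σ) be a generalized admissible trajectory on I = [a,b] with c(γ(a), γ(a), σ(a)) = 0, finite values of c along the trajectory, and suppose inf_{σ'∈Σ} c(γ(b), γ(b), σ') = 0 and V(γ(a)) = c(γ(a), γ(b), σ(b)) + c_f(γ(b)) < +∞. Then (γ, σ) is an optimal trajectory: V(γ(a)) = c(γ(a), γ(t), σ(t)) + V(γ(t)) for all t ∈ I. -/

import Mathlib

open ENNReal

/-!
By (C1), concatenating a move from `x` to `y` with any move from `y` costs no less than some
move from `x`, so `V x ≤ c x y σ + V y` always. Conversely, admissibility splits the cost of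
reaching `γ b` at `γ t`; the remaining leg bounds `V (γ t)` from above, and since `γ b`
realizes the infimum defining `V (γ a)`, the two sides meet.
-/

section ValueFunction

variable {X S : Type*} (c : X → X → S → ℝ≥0∞) (cf : X → ℝ≥0∞) (V : X → ℝ≥0∞)

theorem value_le_cost_add_final (hV : ∀ x, V x = ⨅ (y : X) (σ : S), c x y σ + cf y)
    (x y : X) (σ : S) : V x ≤ c x y σ + cf y :=
  (hV x).symm ▸ iInf₂_le (f := fun y σ => c x y σ + cf y) y σ

theorem value_le_cost_add_value
    (C1 : ∀ x y z : X, ∀ σ₁ σ₂ : S, ∃ σ' : S, c x z σ' ≤ c x y σ₁ + c y z σ₂)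
    (hV : ∀ x, V x = ⨅ (y : X) (σ : S), c x y σ + cf y) (x y : X) (σ : S) :
    V x ≤ c x y σ + V y := by
  rw [hV y, ENNReal.add_iInf]
  refine le_iInf fun z => ?_
  rw [ENNReal.add_iInf]
  refine le_iInf fun s => ?_
  obtain ⟨σ', hσ'⟩ := C1 x y z σ s
  calc V x ≤ c x z σ' + cf z := value_le_cost_add_final c cf V hV x z σ'
    _ ≤ c x y σ + c y z s + cf z := by gcongr
    _ = c x y σ + (c y z s + cf z) := add_assoc _ _ _

end ValueFunction

theorem endpoint_realizes_inf_optimal_general {X S : Type*}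
    {I : Type*} [LinearOrder I]
    (c : X → X → S → ℝ≥0∞) (cf : X → ℝ≥0∞)
    (C1 : ∀ x y z : X, ∀ σ₁ σ₂ : S, ∃ σ' : S, c x z σ' ≤ c x y σ₁ + c y z σ₂)
    (V : X → ℝ≥0∞)
    (hV : ∀ x, V x = ⨅ (y : X) (σ : S), c x y σ + cf y)
    (a b : I) (hb : ∀ t, t ≤ b)
    (γ : I → X) (σ : I → S)
    (hadm : ∀ t₁ t₂ : I, t₁ ≤ t₂ → ∃ s : S,
      c (γ a) (γ t₁) (σ t₁) + c (γ t₁) (γ t₂) s ≤ c (γ a) (γ t₂) (σ t₂))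
    (hrealize : V (γ a) = c (γ a) (γ b) (σ b) + cf (γ b)) :
    ∀ t : I, V (γ a) = c (γ a) (γ t) (σ t) + V (γ t) := by
  intro t
  refine le_antisymm (value_le_cost_add_value c cf V C1 hV _ _ _) ?_
  obtain ⟨s, hs⟩ := hadm t b (hb t)
  calc c (γ a) (γ t) (σ t) + V (γ t)
      ≤ c (γ a) (γ t) (σ t) + (c (γ t) (γ b) s + cf (γ b)) := by
        gcongr; exact value_le_cost_add_final c cf V hV _ _ _
    _ ≤ c (γ a) (γ b) (σ b) + cf (γ b) := by rw [← add_assoc]; gcongr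
    _ = V (γ a) := hrealize.symm

/-- If the endpoint realizes the infimum defining `V(γ(a))` and the stay-cost at the
endpoint is infimally zero, then the trajectory is optimal. -/
theorem endpoint_realizes_inf_optimal {X S : Type*} [Nonempty X] [Nonempty S]
    {I : Type*} [LinearOrder I]
    (c : X → X → S → ℝ≥0∞) (cf : X → ℝ≥0∞)
    (C1 : ∀ x y z : X, ∀ σ₁ σ₂ : S, ∃ σ' : S, c x z σ' ≤ c x y σ₁ + c y z σ₂)
    (C2 : ∀ x z : X, ∀ σ : S, ∃ (y' : X) (σ₁' σ₂' : S),
      c x y' σ₁' + c y' z σ₂' ≤ c x z σ)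
    (V : X → ℝ≥0∞)
    (hV : ∀ x, V x = ⨅ (y : X) (σ : S), c x y σ + cf y)
    (a b : I) (ha : ∀ t, a ≤ t) (hb : ∀ t, t ≤ b)
    (γ : I → X) (σ : I → S)
    (hfin : ∀ t, c (γ a) (γ t) (σ t) ≠ ⊤)
    (hadm : ∀ t₁ t₂ : I, t₁ ≤ t₂ → ∃ s : S,
      c (γ a) (γ t₁) (σ t₁) + c (γ t₁) (γ t₂) s ≤ c (γ a) (γ t₂) (σ t₂))
    (hzeroa : c (γ a) (γ a) (σ a) = 0)
    (hzerob : ⨅ σ' : S, c (γ b) (γ b) σ' = 0)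
    (hrealize : V (γ a) = c (γ a) (γ b) (σ b) + cf (γ b))
    (hfinV : V (γ a) ≠ ⊤) :
    ∀ t : I, V (γ a) = c (γ a) (γ t) (σ t) + V (γ t) :=
  endpoint_realizes_inf_optimal_general c cf C1 V hV a b hb γ σ hadm hrealize
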